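/- arXiv:2211.14702 — 2 statements merged into one kernel-verified Lean document; each statement's English description precedes it below -/
import Mathlib

section
/- Let A be a finite subset of F_p. If every element of A can be written as a difference of two elements of A + A in at least c·|A| ways, then the multiplicative energy of A satisfies E(A) ≤ C · D(A+A)/|A|⁴, where D(S) = #{(a₁,…,a₈) ∈ S⁸ : (a₁-a₂)(a₃-a₄) = (a₅-a₆)(a₇-a₈)} and C depends only on c. -/
open Finset Pointwise

/-- The multiplicative energy of a finset `A ⊆ F_p`. -/
def mulE {p : ℕ} [Fact p.Prime] (A : Finset (ZMod p)) : ℕ :=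
  ((Fintype.piFinset fun _ : Fin 4 => A).filter fun a => a 0 * a 2 = a 1 * a 3).card

/-- The eight-fold difference energy `D(S)` of a finset `S ⊆ F_p`. -/
def diffE {p : ℕ} [Fact p.Prime] (S : Finset (ZMod p)) : ℕ :=
  ((Fintype.piFinset fun _ : Fin 8 => S).filter fun a =>
    (a 0 - a 1) * (a 2 - a 3) = (a 4 - a 5) * (a 6 - a 7)).card

/-- Interleave four pairs into an 8-tuple. -/
def g8 {α : Type*} (f : Fin 4 → α × α) : Fin 8 → α :=
  ![(f 0).1, (f 0).2, (f 1).1, (f 1).2, (f 2).1, (f 2).2, (f 3).1, (f 3).2]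

lemma g8_inj {α : Type*} : Function.Injective (g8 (α := α)) := by
  intro f f' h
  have H : ∀ j : Fin 8, g8 f j = g8 f' j := fun j => congrFun h j
  funext i
  fin_cases i
  · exact Prod.ext (H 0) (H 1)
  · exact Prod.ext (H 2) (H 3)
  · exact Prod.ext (H 4) (H 5)
  · exact Prod.ext (H 6) (H 7)

/-- If every element of `A` has at least `c·|A|` representations as a difference of two
elements of `A + A`, then `E(A) ≤ C · D(A+A)/|A|⁴` with `C` depending only on `c`. -/
theorem stmt5 (c : ℝ) (hc : 0 < c) :
    ∃ C : ℝ, 0 < C ∧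
      ∀ (p : ℕ) (_ : Fact p.Prime) (A : Finset (ZMod p)), A.Nonempty →
        (∀ x ∈ A,
          c * (A.card : ℝ) ≤
            ((((A + A) ×ˢ (A + A)).filter fun q => q.1 - q.2 = x).card : ℝ)) →
        (mulE A : ℝ) ≤ C * (diffE (A + A) : ℝ) / (A.card : ℝ) ^ 4 := by
  refine ⟨c⁻¹ ^ 4, by positivity, ?_⟩
  intro p hp A hA hrep
  set S := A + A with hS
  set Q := (Fintype.piFinset fun _ : Fin 4 => A).filter
      (fun a => a 0 * a 2 = a 1 * a 3) with hQ
  set T := (Fintype.piFinset fun _ : Fin 8 => S).filter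
      (fun a => (a 0 - a 1) * (a 2 - a 3) = (a 4 - a 5) * (a 6 - a 7)) with hT
  -- For each `q` and coordinate `i`, the pairs representing `q i`.
  set σ : Fin 4 → Fin 4 := ![0, 2, 1, 3] with hσ
  set P : (Fin 4 → ZMod p) → Fin 4 → Finset (ZMod p × ZMod p) :=
    fun q i => (S ×ˢ S).filter (fun r => r.1 - r.2 = q (σ i)) with hP
  -- the image sets
  set U : (Fin 4 → ZMod p) → Finset (Fin 8 → ZMod p) :=
    fun q => (Fintype.piFinset (P q)).image g8 with hU
  have hUsub : ∀ q ∈ Q, U q ⊆ T := by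
    intro q hq b hb
    obtain ⟨f, hf, rfl⟩ := Finset.mem_image.mp hb
    rw [Fintype.mem_piFinset] at hf
    have hmem : ∀ i, f i ∈ S ×ˢ S ∧ (f i).1 - (f i).2 = q (σ i) := by
      intro i
      have := hf i
      rw [hP, Finset.mem_filter] at this
      exact this
    have hfst : ∀ i, (f i).1 ∈ S := fun i => (Finset.mem_product.mp (hmem i).1).1
    have hsnd : ∀ i, (f i).2 ∈ S := fun i => (Finset.mem_product.mp (hmem i).1).2
    rw [hT, Finset.mem_filter]
    constructor
    · rw [Fintype.mem_piFinset]
      intro j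
      fin_cases j
      · exact hfst 0
      · exact hsnd 0
      · exact hfst 1
      · exact hsnd 1
      · exact hfst 2
      · exact hsnd 2
      · exact hfst 3
      · exact hsnd 3
    · have e0 : g8 f 0 - g8 f 1 = q 0 := (hmem 0).2
      have e1 : g8 f 2 - g8 f 3 = q 2 := (hmem 1).2
      have e2 : g8 f 4 - g8 f 5 = q 1 := (hmem 2).2
      have e3 : g8 f 6 - g8 f 7 = q 3 := (hmem 3).2
      have hqe : q 0 * q 2 = q 1 * q 3 := (Finset.mem_filter.mp hq).2
      rw [e0, e1, e2, e3, hqe]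
  have hdisj : ∀ q ∈ Q, ∀ q' ∈ Q, q ≠ q' → Disjoint (U q) (U q') := by
    intro q _ q' _ hne
    rw [Finset.disjoint_left]
    intro b hb hb'
    obtain ⟨f, hf, rfl⟩ := Finset.mem_image.mp hb
    obtain ⟨f', hf', hff⟩ := Finset.mem_image.mp hb'
    rw [Fintype.mem_piFinset] at hf hf'
    apply hne
    have hfe : f' = f := g8_inj hff
    have hall : ∀ i, q (σ i) = q' (σ i) := by
      intro i
      have h1 : (f i).1 - (f i).2 = q (σ i) := (Finset.mem_filter.mp (hf i)).2
      have h2 : (f' i).1 - (f' i).2 = q' (σ i) := (Finset.mem_filter.mp (hf' i)).2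
      rw [← h1, ← h2, hfe]
    funext i
    fin_cases i
    · exact hall 0
    · exact hall 2
    · exact hall 1
    · exact hall 3
  -- counting
  have hcount : ∑ q ∈ Q, (U q).card ≤ T.card := by
    rw [← Finset.card_biUnion hdisj]
    exact Finset.card_le_card (Finset.biUnion_subset.mpr hUsub)
  have hUcard : ∀ q, (U q).card = ∏ i : Fin 4, (P q i).card := by
    intro q
    rw [hU]
    rw [Finset.card_image_of_injective _ g8_inj, Fintype.card_piFinset]
  have hA0 : (0 : ℝ) < A.card := by exact_mod_cast Finset.card_pos.mpr hA
  have hlow : ∀ q ∈ Q, (c * A.card) ^ 4 ≤ ((U q).card : ℝ) := by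
    intro q hq
    rw [hUcard q]
    push_cast
    have hqi : ∀ i, q i ∈ A := by
      have := (Finset.mem_filter.mp hq).1
      rw [Fintype.mem_piFinset] at this
      exact this
    calc (c * A.card) ^ 4 = ∏ _i : Fin 4, (c * A.card) := by
          rw [Finset.prod_const]; simp
      _ ≤ ∏ i : Fin 4, ((P q i).card : ℝ) := by
          apply Finset.prod_le_prod
          · intro i _; positivity
          · intro i _; exact hrep (q (σ i)) (hqi (σ i))
  have key : (Q.card : ℝ) * (c * A.card) ^ 4 ≤ (T.card : ℝ) := by
    calc (Q.card : ℝ) * (c * A.card) ^ 4 = ∑ _q ∈ Q, (c * A.card) ^ 4 := by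
          rw [Finset.sum_const]; simp [mul_comm]
      _ ≤ ∑ q ∈ Q, ((U q).card : ℝ) := Finset.sum_le_sum hlow
      _ ≤ (T.card : ℝ) := by exact_mod_cast hcount
  have hmul : (mulE A : ℝ) = (Q.card : ℝ) := rfl
  have hdiff : (diffE (A + A) : ℝ) = (T.card : ℝ) := rfl
  rw [hmul, hdiff, le_div_iff₀ (by positivity : (0:ℝ) < (A.card : ℝ) ^ 4)]
  calc (Q.card : ℝ) * (A.card : ℝ) ^ 4
      = c⁻¹ ^ 4 * ((Q.card : ℝ) * (c * A.card) ^ 4) := by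
        field_simp
    _ ≤ c⁻¹ ^ 4 * (T.card : ℝ) := by
        apply mul_le_mul_of_nonneg_left key
        positivity
end

section
/- Let p be a prime, E a finite nonempty subset of F_p^×, and define for each a ∈ F_p^× the dilate aE = {ae : e ∈ E}. For finite sets M, N₀, N₂ ⊆ F_p with 0 ∉ N₀, the counting function σ(x₁,x₂,y) = #{(m₁,m₂,n,a) ∈ M×M×N₂×N₀ : m₁ ≠ m₂, m₁a = x₁, m₂a = x₂, n = ay in F_p} satisfies Σ_{x₁,x₂,y ∈ F_p} σ(x₁,x₂,y)² ≤ |M|² · E(N₀, N₂), where E(N₀,N₂) is the multiplicative energy #{(a,a',n,n') ∈ N₀²×N₂² : na' = n'a}. -/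
/-!
Since every `a ∈ N₀` is invertible, a quadruple `(m₁, m₂, n, a)` counted by `σ(x₁, x₂, y)`
determines `(x₁, x₂, y) = (m₁a, m₂a, n/a)`, so `σ` is the fibre-size function of this map and
`∑ σ²` counts pairs of quadruples with the same image. Such a pair is determined by
`(m₁, m₂, a, a', n, n')`, because `m₁' = m₁a/a'` and `m₂' = m₂a/a'`, and `n/a = n'/a'`
is the energy relation `na' = n'a`.
-/

open Finset

/-- The counting function `σ(x₁,x₂,y)` of quadruples `(m₁,m₂,n,a) ∈ M×M×N₂×N₀` with
`m₁ ≠ m₂`, `m₁a = x₁`, `m₂a = x₂` and `n = ay`. -/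
def sigmaCount {p : ℕ} [Fact p.Prime] (M N₂ N₀ : Finset (ZMod p))
    (x₁ x₂ y : ZMod p) : ℕ :=
  ((M ×ˢ M ×ˢ N₂ ×ˢ N₀).filter fun q =>
    q.1 ≠ q.2.1 ∧ q.1 * q.2.2.2 = x₁ ∧ q.2.1 * q.2.2.2 = x₂ ∧ q.2.2.1 = q.2.2.2 * y).card

/-- The multiplicative energy `E(N₀,N₂) = #{(a,a',n,n') ∈ N₀²×N₂² : na' = n'a}`. -/
def mulEnergy' {p : ℕ} [Fact p.Prime] (N₀ N₂ : Finset (ZMod p)) : ℕ :=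
  ((N₀ ×ˢ N₀ ×ˢ N₂ ×ˢ N₂).filter fun q =>
    q.2.2.1 * q.2.1 = q.2.2.2 * q.1).card

theorem Finset.sum_card_fiber_sq {ι κ : Type*} [DecidableEq ι] [DecidableEq κ] [Fintype κ]
    (s : Finset ι) (f : ι → κ) :
    ∑ k, #{i ∈ s | f i = k} ^ 2 = #{ij ∈ s ×ˢ s | f ij.1 = f ij.2} := by
  rw [card_eq_sum_card_fiberwise (f := fun ij => f ij.1) (t := univ) fun _ _ => mem_univ _]
  refine sum_congr rfl fun k _ => ?_
  rw [sq, ← card_product, ← filter_product, filter_filter]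
  exact congrArg card <| filter_congr fun _ _ =>
    ⟨fun ⟨h₁, h₂⟩ => ⟨h₁.trans h₂.symm, h₁⟩, fun ⟨h₁, h₂⟩ => ⟨h₂, h₁.symm.trans h₂⟩⟩

section Dilation

variable {K : Type*} [Field K]

/-- `(m₁, m₂, n, a) ↦ (m₁a, m₂a, n/a)`; for `a ≠ 0` its fibres are what `sigmaCount` counts. -/
def dilationKey (q : K × K × K × K) : K × K × K :=
  (q.1 * q.2.2.2, q.2.1 * q.2.2.2, q.2.2.1 / q.2.2.2)

theorem dilationKey_eq_iff {m₁ m₂ n a m₁' m₂' n' a' : K} (ha : a ≠ 0) (ha' : a' ≠ 0) :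
    dilationKey (m₁, m₂, n, a) = dilationKey (m₁', m₂', n', a') ↔
      m₁ * a = m₁' * a' ∧ m₂ * a = m₂' * a' ∧ n * a' = n' * a := by
  simp only [dilationKey, Prod.mk.injEq, div_eq_div_iff ha ha']

theorem card_dilationKey_eq_le [DecidableEq K] {M N₀ N₂ : Finset K} (hN₀ : ∀ a ∈ N₀, a ≠ 0)
    {S : Finset (K × K × K × K)} (hS : S ⊆ M ×ˢ M ×ˢ N₂ ×ˢ N₀) :
    #{r ∈ S ×ˢ S | dilationKey r.1 = dilationKey r.2} ≤
      #M ^ 2 * #{e ∈ N₀ ×ˢ N₀ ×ˢ N₂ ×ˢ N₂ | e.2.2.1 * e.2.1 = e.2.2.2 * e.1} := by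
  have hS₀ : ∀ q ∈ S, q.2.2.2 ≠ 0 := fun q hq =>
    hN₀ _ (mem_product.1 (mem_product.1 (mem_product.1 (hS hq)).2).2).2
  rw [sq, ← card_product, ← card_product]
  refine card_le_card_of_injOn
    (fun r => ((r.1.1, r.1.2.1), r.1.2.2.2, r.2.2.2.2, r.1.2.2.1, r.2.2.2.1)) ?_ ?_
  · rintro ⟨⟨m₁, m₂, n, a⟩, ⟨m₁', m₂', n', a'⟩⟩ hr
    simp only [coe_filter, mem_product, Set.mem_ofPred_eq] at hr
    obtain ⟨⟨hq, hq'⟩, hkey⟩ := hr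
    have h := hS hq
    have h' := hS hq'
    simp only [mem_product] at h h'
    have key := (dilationKey_eq_iff (hS₀ _ hq) (hS₀ _ hq')).1 hkey
    simp only [coe_product, coe_filter, Set.mem_prod, mem_coe, mem_product, Set.mem_ofPred_eq]
    exact ⟨⟨h.1, h.2.1⟩, ⟨h.2.2.2, h'.2.2.2, h.2.2.1, h'.2.2.1⟩, key.2.2⟩
  · rintro ⟨⟨m₁, m₂, n, a⟩, ⟨m₁', m₂', n', a'⟩⟩ hr ⟨⟨l₁, l₂, k, b⟩, ⟨l₁', l₂', k', b'⟩⟩ hs heq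
    simp only [Prod.mk.injEq] at heq
    obtain ⟨⟨rfl, rfl⟩, rfl, rfl, rfl, rfl⟩ := heq
    simp only [coe_filter, mem_product, Set.mem_ofPred_eq] at hr hs
    have ha := hS₀ _ hr.1.1
    have ha' := hS₀ _ hr.1.2
    have hm := (dilationKey_eq_iff ha ha').1 hr.2
    have hl := (dilationKey_eq_iff ha ha').1 hs.2
    have h₁ : m₁' = l₁' := mul_right_cancel₀ ha' (hm.1.symm.trans hl.1)
    have h₂ : m₂' = l₂' := mul_right_cancel₀ ha' (hm.2.1.symm.trans hl.2.1)
    rw [h₁, h₂]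

end Dilation

theorem sigmaCount_eq_card_dilationKey {p : ℕ} [Fact p.Prime] {M N₀ N₂ : Finset (ZMod p)}
    (hN₀ : ∀ a ∈ N₀, a ≠ 0) (x₁ x₂ y : ZMod p) :
    sigmaCount M N₂ N₀ x₁ x₂ y =
      #{q ∈ {q ∈ M ×ˢ M ×ˢ N₂ ×ˢ N₀ | q.1 ≠ q.2.1} | dilationKey q = (x₁, x₂, y)} := by
  rw [sigmaCount, filter_filter]
  refine congrArg card (filter_congr fun q hq => ?_)
  have ha := hN₀ _ (mem_product.1 (mem_product.1 (mem_product.1 hq).2).2).2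
  simp only [dilationKey, Prod.mk.injEq, div_eq_iff ha, mul_comm q.2.2.2 y]

/-- Second moment bound: `∑_{x₁,x₂,y} σ(x₁,x₂,y)² ≤ |M|²·E(N₀,N₂)`. -/
theorem stmt17 {p : ℕ} [Fact p.Prime] (M N₀ N₂ : Finset (ZMod p))
    (hN₀ : ∀ a ∈ N₀, a ≠ 0) :
    ∑ x₁ : ZMod p, ∑ x₂ : ZMod p, ∑ y : ZMod p,
        (sigmaCount M N₂ N₀ x₁ x₂ y) ^ 2 ≤
      M.card ^ 2 * mulEnergy' N₀ N₂ := by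
  set S := {q ∈ M ×ˢ M ×ˢ N₂ ×ˢ N₀ | q.1 ≠ q.2.1}
  calc ∑ x₁ : ZMod p, ∑ x₂ : ZMod p, ∑ y : ZMod p, sigmaCount M N₂ N₀ x₁ x₂ y ^ 2
      = ∑ t : ZMod p × ZMod p × ZMod p, #{q ∈ S | dilationKey q = t} ^ 2 := by
        simp only [Fintype.sum_prod_type, sigmaCount_eq_card_dilationKey hN₀, S]
    _ = #{r ∈ S ×ˢ S | dilationKey r.1 = dilationKey r.2} := sum_card_fiber_sq S dilationKey
    _ ≤ #M ^ 2 * mulEnergy' N₀ N₂ := card_dilationKey_eq_le hN₀ (filter_subset _ _)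
end
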